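/- Any two star colorings of C_7 using exactly 4 colors with no 2-colored path on 3 vertices are isomorphic as vertex-colored graphs: there is a graph automorphism π of C_7 and a bijection θ of the color sets with θ(φ_1(v)) = φ_2(π(v)) for all vertices v. -/

import Mathlib

open SimpleGraph

/-- The cycle graph on `n` vertices, with vertex set `ZMod n` and edges `{i, i+1}`. -/
def zmodCycleGraph (n : ℕ) : SimpleGraph (ZMod n) where
  Adj i j := i ≠ j ∧ (j = i + 1 ∨ i = j + 1)
  symm := by refine ⟨?_⟩; intro i j h; exact ⟨h.1.symm, h.2.symm⟩
  loopless := by refine ⟨?_⟩; intro i h; exact h.1 rfl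

/-- The splitting graph of the cycle `C_n`: vertices `inl i` are the cycle vertices `v_i`,
vertices `inr i` are the added vertices `v_i'`, with `v_i'` adjacent to `v_{i-1}` and `v_{i+1}`. -/
def splitCycle (n : ℕ) : SimpleGraph (ZMod n ⊕ ZMod n) where
  Adj u v :=
    match u, v with
    | .inl i, .inl j => i ≠ j ∧ (j = i + 1 ∨ i = j + 1)
    | .inl i, .inr j => i = j + 1 ∨ j = i + 1
    | .inr i, .inl j => j = i + 1 ∨ i = j + 1
    | .inr _, .inr _ => False
  symm := by
    refine ⟨?_⟩
    rintro (i | i) (j | j) h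
    · exact ⟨h.1.symm, h.2.symm⟩
    · exact h
    · exact h
    · exact h.elim
  loopless := by
    refine ⟨?_⟩
    rintro (i | i) h
    · exact h.1 rfl
    · exact h

/-- A star coloring: a proper vertex coloring such that no path on 4 vertices is 2-colored. -/
def IsStarColoring {V α : Type*} (G : SimpleGraph V) (c : V → α) : Prop :=
  (∀ u v, G.Adj u v → c u ≠ c v) ∧
  ∀ w x y z, G.Adj w x → G.Adj x y → G.Adj y z → w ≠ y → x ≠ z → w ≠ z →
    ¬(c w = c y ∧ c x = c z)

/-- The star chromatic number: the least `k` admitting a star coloring with `k` colors. -/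
noncomputable def starChromaticNumber {V : Type*} (G : SimpleGraph V) : ℕ :=
  sInf {k | ∃ c : V → Fin k, IsStarColoring G c}

set_option maxRecDepth 20000 in
set_option synthInstance.maxSize 2000 in
set_option synthInstance.maxHeartbeats 1000000 in
set_option maxHeartbeats 2000000 in
theorem keyTup : ∀ c0 c1 c2 c3 c4 c5 c6 : Fin 4,
    c0 ≠ c1 → c1 ≠ c2 → c2 ≠ c3 → c3 ≠ c4 → c4 ≠ c5 → c5 ≠ c6 → c6 ≠ c0 →
    c0 ≠ c2 → c1 ≠ c3 → c2 ≠ c4 → c3 ≠ c5 → c4 ≠ c6 → c5 ≠ c0 → c6 ≠ c1 →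
    (∀ d : Fin 4, c0 = d ∨ c1 = d ∨ c2 = d ∨ c3 = d ∨ c4 = d ∨ c5 = d ∨ c6 = d) →
    (c0 = c3 ∧ c1 = c4 ∧ c2 = c5) ∨ (c1 = c4 ∧ c2 = c5 ∧ c3 = c6) ∨
    (c2 = c5 ∧ c3 = c6 ∧ c4 = c0) ∨ (c3 = c6 ∧ c4 = c0 ∧ c5 = c1) ∨
    (c4 = c0 ∧ c5 = c1 ∧ c6 = c2) ∨ (c5 = c1 ∧ c6 = c2 ∧ c0 = c3) ∨
    (c6 = c2 ∧ c0 = c3 ∧ c1 = c4) := by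
  decide

def canon : ZMod 7 → Fin 4 := show Fin 7 → Fin 4 from ![0, 1, 2, 0, 1, 2, 3]
def pos4 : Fin 4 → ZMod 7 := show Fin 4 → Fin 7 from ![0, 1, 2, 6]

/-- Rotation by `k` as a graph automorphism of the cycle. -/
def rotIso (k : ZMod 7) : zmodCycleGraph 7 ≃g zmodCycleGraph 7 where
  toEquiv := Equiv.addLeft k
  map_rel_iff' := by
    intro u v
    show (k + u ≠ k + v ∧ (k + v = k + u + 1 ∨ k + u = k + v + 1)) ↔ _
    constructor
    · rintro ⟨h1, h2⟩
      refine ⟨fun e => h1 (by rw [e]), ?_⟩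
      rcases h2 with h | h
      · exact Or.inl (by have := h; rwa [add_assoc, add_right_inj] at this)
      · exact Or.inr (by have := h; rwa [add_assoc, add_right_inj] at this)
    · rintro ⟨h1, h2⟩
      refine ⟨fun e => h1 (add_left_cancel e), ?_⟩
      rcases h2 with h | h
      · exact Or.inl (by rw [h, add_assoc])
      · exact Or.inr (by rw [h, add_assoc])

lemma rotCase (φ : ZMod 7 → Fin 4) (k : ZMod 7)
    (h3 : φ (k + 3) = φ (k + 0)) (h4 : φ (k + 4) = φ (k + 1))
    (h5 : φ (k + 5) = φ (k + 2)) :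
    ∀ v : ZMod 7, φ (k + v) = φ (k + pos4 (canon v)) := by
  intro v
  fin_cases v
  · rfl
  · rfl
  · rfl
  · exact h3
  · exact h4
  · exact h5
  · rfl

lemma key (φ : ZMod 7 → Fin 4) (h : IsStarColoring (zmodCycleGraph 7) φ)
    (hs : Function.Surjective φ) (hp : ∀ i : ZMod 7, φ (i - 1) ≠ φ (i + 1)) :
    ∃ (k : ZMod 7) (g : Fin 4 → Fin 4), ∀ v : ZMod 7, φ (k + v) = g (canon v) := by
  have hA : ∀ i : ZMod 7, φ i ≠ φ (i + 1) := by
    intro i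
    exact h.1 i (i + 1) ⟨by intro e; exact absurd (left_eq_add.mp e) (by decide), Or.inl rfl⟩
  have hA' : ∀ i j : ZMod 7, j = i + 1 → φ i ≠ φ j := fun i j hj => hj ▸ hA i
  have hB' : ∀ i j l : ZMod 7, i = l - 1 → j = l + 1 → φ i ≠ φ j :=
    fun i j l h1 h2 => h1 ▸ h2 ▸ hp l
  have hsur : ∀ d : Fin 4, φ 0 = d ∨ φ 1 = d ∨ φ 2 = d ∨ φ 3 = d ∨ φ 4 = d ∨ φ 5 = d ∨
      φ 6 = d := by
    intro d
    obtain ⟨i, hi⟩ := hs d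
    fin_cases i
    · exact Or.inl hi
    · exact Or.inr (Or.inl hi)
    · exact Or.inr (Or.inr (Or.inl hi))
    · exact Or.inr (Or.inr (Or.inr (Or.inl hi)))
    · exact Or.inr (Or.inr (Or.inr (Or.inr (Or.inl hi))))
    · exact Or.inr (Or.inr (Or.inr (Or.inr (Or.inr (Or.inl hi)))))
    · exact Or.inr (Or.inr (Or.inr (Or.inr (Or.inr (Or.inr hi)))))
  have := keyTup (φ 0) (φ 1) (φ 2) (φ 3) (φ 4) (φ 5) (φ 6)
    (hA' 0 1 (by decide)) (hA' 1 2 (by decide)) (hA' 2 3 (by decide)) (hA' 3 4 (by decide))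
    (hA' 4 5 (by decide)) (hA' 5 6 (by decide)) (hA' 6 0 (by decide))
    (hB' 0 2 1 (by decide) (by decide)) (hB' 1 3 2 (by decide) (by decide))
    (hB' 2 4 3 (by decide) (by decide)) (hB' 3 5 4 (by decide) (by decide))
    (hB' 4 6 5 (by decide) (by decide)) (hB' 5 0 6 (by decide) (by decide))
    (hB' 6 1 0 (by decide) (by decide)) hsur
  rcases this with ⟨e1, e2, e3⟩ | ⟨e1, e2, e3⟩ | ⟨e1, e2, e3⟩ | ⟨e1, e2, e3⟩ |
    ⟨e1, e2, e3⟩ | ⟨e1, e2, e3⟩ | ⟨e1, e2, e3⟩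
  · exact ⟨0, fun d => φ (0 + pos4 d), rotCase φ 0 e1.symm e2.symm e3.symm⟩
  · exact ⟨1, fun d => φ (1 + pos4 d), rotCase φ 1 e1.symm e2.symm e3.symm⟩
  · exact ⟨2, fun d => φ (2 + pos4 d), rotCase φ 2 e1.symm e2.symm e3.symm⟩
  · exact ⟨3, fun d => φ (3 + pos4 d), rotCase φ 3 e1.symm e2.symm e3.symm⟩
  · exact ⟨4, fun d => φ (4 + pos4 d), rotCase φ 4 e1.symm e2.symm e3.symm⟩
  · exact ⟨5, fun d => φ (5 + pos4 d), rotCase φ 5 e1.symm e2.symm e3.symm⟩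
  · exact ⟨6, fun d => φ (6 + pos4 d), rotCase φ 6 e1.symm e2.symm e3.symm⟩

theorem stmt_17 (φ₁ φ₂ : ZMod 7 → Fin 4)
    (h₁ : IsStarColoring (zmodCycleGraph 7) φ₁) (h₂ : IsStarColoring (zmodCycleGraph 7) φ₂)
    (hs₁ : Function.Surjective φ₁) (hs₂ : Function.Surjective φ₂)
    (hp₁ : ∀ i : ZMod 7, φ₁ (i - 1) ≠ φ₁ (i + 1))
    (hp₂ : ∀ i : ZMod 7, φ₂ (i - 1) ≠ φ₂ (i + 1)) :
    ∃ (π : zmodCycleGraph 7 ≃g zmodCycleGraph 7) (θ : Fin 4 ≃ Fin 4),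
      ∀ v : ZMod 7, θ (φ₁ v) = φ₂ (π v) := by
  obtain ⟨k₁, g₁, H₁⟩ := key φ₁ h₁ hs₁ hp₁
  obtain ⟨k₂, g₂, H₂⟩ := key φ₂ h₂ hs₂ hp₂
  have gsur : ∀ (φ : ZMod 7 → Fin 4) (k : ZMod 7) (g : Fin 4 → Fin 4),
      (∀ v, φ (k + v) = g (canon v)) → Function.Surjective φ → Function.Surjective g := by
    intro φ k g H hs d
    obtain ⟨v, hv⟩ := hs d
    refine ⟨canon (v - k), ?_⟩
    rw [← H (v - k), add_sub_cancel]
    exact hv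
  have hb₁ : Function.Bijective g₁ :=
    Finite.surjective_iff_bijective.mp (gsur φ₁ k₁ g₁ H₁ hs₁)
  have hb₂ : Function.Bijective g₂ :=
    Finite.surjective_iff_bijective.mp (gsur φ₂ k₂ g₂ H₂ hs₂)
  let E₁ := Equiv.ofBijective g₁ hb₁
  let E₂ := Equiv.ofBijective g₂ hb₂
  refine ⟨(rotIso k₁).symm.trans (rotIso k₂), E₁.symm.trans E₂, ?_⟩
  intro v
  have hv : φ₁ v = g₁ (canon (-k₁ + v)) := by rw [← H₁ (-k₁ + v), add_neg_cancel_left]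
  have hπ : ((rotIso k₁).symm.trans (rotIso k₂)) v = k₂ + (-k₁ + v) := rfl
  rw [hv, hπ, H₂ (-k₁ + v)]
  show E₂ (E₁.symm (E₁ (canon (-k₁ + v)))) = _
  rw [Equiv.symm_apply_apply]
  rfl
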